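/- arXiv:1403.8027 — 3 statements merged into one kernel-verified Lean document; each statement's English description precedes it below -/
import Mathlib

section
/- If G is a k-critical graph and M is a non-trivial module of G, then the subgraph of G induced by M is ℓ-critical for some ℓ < k. -/
/-!
Let `ℓ = χ(G[M]) ≤ k - 1`. If some proper subset `S ⊂ M` still had `χ(G[S]) = ℓ`, take a
`(k - 1)`-coloring of `G - (M \ S)`: it uses at least `ℓ` colors on `S`. A vertex outside `M` with
a neighbour in `M` is adjacent to all of `S`, so it avoids all these colors, and recoloring `M`
with `ℓ` of them yields a `(k - 1)`-coloring of `G`, which is impossible.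
-/

open SimpleGraph

/-- A graph is `k`-critical if its chromatic number equals `k` and every proper
induced subgraph is `(k-1)`-colorable. -/
def IsKCritical {V : Type*} (G : SimpleGraph V) (k : ℕ) : Prop :=
  G.chromaticNumber = k ∧ ∀ s : Set V, s ≠ Set.univ → (G.induce s).Colorable (k - 1)

/-- A set `X` of vertices is a module if every vertex outside `X` is adjacent
either to all vertices of `X` or to none of them. -/
def IsModule {V : Type*} (G : SimpleGraph V) (X : Set V) : Prop :=
  ∀ v ∉ X, (∀ x ∈ X, G.Adj v x) ∨ (∀ x ∈ X, ¬ G.Adj v x)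

/-- `G` contains no induced subgraph isomorphic to `H`. -/
def InducedFree {V W : Type*} (G : SimpleGraph V) (H : SimpleGraph W) : Prop :=
  ¬ ∃ s : Set V, Nonempty ((G.induce s) ≃g H)

/-- `G` is (P5, P5-bar)-free. -/
def P5P5barFree {V : Type*} (G : SimpleGraph V) : Prop :=
  InducedFree G (pathGraph 5) ∧ InducedFree G (pathGraph 5)ᶜ

/-- A buoy in `G` given by its five non-empty bags. -/
structure IsBuoy {V : Type*} (G : SimpleGraph V) (B : Fin 5 → Set V) : Prop where
  nonempty : ∀ i, (B i).Nonempty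
  disjoint : ∀ i j, i ≠ j → Disjoint (B i) (B j)
  adj_next : ∀ i, ∀ x ∈ B i, ∀ y ∈ B (i + 1), G.Adj x y
  not_adj_skip : ∀ i, ∀ x ∈ B i, ∀ y ∈ B (i + 2), ¬ G.Adj x y

/-- `G` is a pseudo-buoy with (possibly empty) bags `B 0, …, B 4` partitioning
its vertex set. -/
structure IsPseudoBuoy {V : Type*} (G : SimpleGraph V) (B : Fin 5 → Set V) : Prop where
  cover : (⋃ i, B i) = Set.univ
  disjoint : ∀ i j, i ≠ j → Disjoint (B i) (B j)
  adj_next : ∀ i, ∀ x ∈ B i, ∀ y ∈ B (i + 1), G.Adj x y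
  not_adj_skip : ∀ i, ∀ x ∈ B i, ∀ y ∈ B (i + 2), ¬ G.Adj x y

/-- The graph obtained from `G` by substituting `H` for the module `M`. -/
def substitute {V W : Type*} (G : SimpleGraph V) (M : Set V) (H : SimpleGraph W) :
    SimpleGraph ({v : V // v ∉ M} ⊕ W) where
  Adj x y :=
    match x, y with
    | Sum.inl a, Sum.inl b => G.Adj a b
    | Sum.inl a, Sum.inr _ => ∃ m ∈ M, G.Adj a m
    | Sum.inr _, Sum.inl b => ∃ m ∈ M, G.Adj b m
    | Sum.inr a, Sum.inr b => H.Adj a b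
  symm := by
    constructor
    rintro (a | a) (b | b) h
    · exact G.adj_symm h
    · exact h
    · exact h
    · exact H.adj_symm h
  loopless := by
    constructor
    rintro (a | a) h
    · exact G.irrefl h
    · exact H.irrefl h

/-- The join of two graphs. -/
def joinGraph {V W : Type*} (G : SimpleGraph V) (H : SimpleGraph W) :
    SimpleGraph (V ⊕ W) where
  Adj x y :=
    match x, y with
    | Sum.inl a, Sum.inl b => G.Adj a b
    | Sum.inl _, Sum.inr _ => True
    | Sum.inr _, Sum.inl _ => True
    | Sum.inr a, Sum.inr b => H.Adj a b
  symm := by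
    constructor
    rintro (a | a) (b | b) h
    · exact G.adj_symm h
    · trivial
    · trivial
    · exact H.adj_symm h
  loopless := by
    constructor
    rintro (a | a) h
    · exact G.irrefl h
    · exact H.irrefl h

namespace SimpleGraph

variable {V α : Type*} {G : SimpleGraph V}

lemma Coloring.colorable_ncard_range [Finite α] (C : G.Coloring α) :
    G.Colorable (Set.range C).ncard := by
  have := Fintype.ofFinite (Set.range C)
  rw [Set.ncard_eq_toFinset_card', Set.toFinset_card]
  exact (Coloring.mk (Set.rangeFactorization C)
    fun h hC => C.valid h (congrArg Subtype.val hC)).colorable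

lemma Colorable.exists_coloring_mem [Finite α] {n : ℕ} (hG : G.Colorable n) {A : Set α}
    (hA : n ≤ A.ncard) : ∃ C : G.Coloring α, ∀ v, C v ∈ A := by
  have := Fintype.ofFinite A
  have hcard : n ≤ Fintype.card A := by rwa [← Nat.card_eq_fintype_card, Nat.card_coe_set_eq]
  exact ⟨G.recolorOfEmbedding (Function.Embedding.subtype _) (hG.toColoring hcard),
    fun v => (hG.toColoring hcard v).2⟩

end SimpleGraph

section IsModule

variable {V : Type*} {G : SimpleGraph V} {M : Set V}

/-- Every outside neighbour of `M` is adjacent to all of `M ∩ T`, so it avoids the colors `c` uses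
there, which are the only colors `d` uses. -/
theorem IsModule.colorable_of_coloring_induce {T : Set V} {n : ℕ} (hM : IsModule G M)
    (hT : Mᶜ ⊆ T) (c : (G.induce T).Coloring (Fin n)) (d : (G.induce M).Coloring (Fin n))
    (hd : ∀ m, ∃ x : T, (x : V) ∈ M ∧ c x = d m) : G.Colorable n := by
  classical
  have across : ∀ v w (hv : v ∉ M) (hw : w ∈ M), G.Adj v w → c ⟨v, hT hv⟩ ≠ d ⟨w, hw⟩ := by
    intro v w hv hw hvw
    obtain ⟨x, hxM, hx⟩ := hd ⟨w, hw⟩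
    rcases hM v hv with hall | hnone
    · exact hx ▸ c.valid (G := G.induce T) (hall x hxM)
    · exact absurd hvw (hnone w hw)
  refine ⟨Coloring.mk (fun v => if h : v ∈ M then d ⟨v, h⟩ else c ⟨v, hT h⟩) ?_⟩
  intro v w hvw
  by_cases hv : v ∈ M <;> by_cases hw : w ∈ M <;> simp only [hv, hw, dite_true, dite_false]
  · exact d.valid (G := G.induce M) hvw
  · exact (across w v hw hv hvw.symm).symm
  · exact across v w hv hw hvw
  · exact c.valid (G := G.induce T) hvw

theorem IsModule.colorable_of_colorable_induce_union {s : Set M} {m n : ℕ} (hM : IsModule G M)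
    (hH : (G.induce M).Colorable m) (hs : ¬ ((G.induce M).induce s).Colorable (m - 1))
    (hT : (G.induce (Subtype.val '' s ∪ Mᶜ)).Colorable n) : G.Colorable n := by
  obtain ⟨c⟩ := hT
  let c' : ((G.induce M).induce s).Coloring (Fin n) :=
    c.comp ⟨fun x => ⟨x.1.1, Or.inl ⟨x.1, x.2, rfl⟩⟩, id⟩
  have hcard : m ≤ (Set.range c').ncard := by
    by_contra! h
    exact hs (c'.colorable_ncard_range.mono (by omega))
  obtain ⟨d, hd⟩ := hH.exists_coloring_mem hcard
  refine hM.colorable_of_coloring_induce Set.subset_union_right c d fun x => ?_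
  obtain ⟨y, hy⟩ := hd x
  exact ⟨_, y.1.2, hy⟩

lemma image_val_union_compl_ne_univ {s : Set M} (hs : s ≠ Set.univ) :
    Subtype.val '' s ∪ Mᶜ ≠ Set.univ := by
  obtain ⟨x, hx⟩ := (Set.ne_univ_iff_exists_notMem s).1 hs
  refine (Set.ne_univ_iff_exists_notMem _).2 ⟨x, ?_⟩
  rintro (⟨y, hy, hyx⟩ | hxM)
  · exact hx (Subtype.ext hyx ▸ hy)
  · exact hxM x.2

end IsModule

section IsKCritical

variable {V : Type*} {G : SimpleGraph V}

lemma IsKCritical.pos [Nonempty V] {k : ℕ} (hG : IsKCritical G k) : 0 < k := by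
  have hk : G.chromaticNumber ≠ ⊤ := hG.1 ▸ ENat.natCast_ne_top k
  simpa [hG.1] using (colorable_of_chromaticNumber_ne_top hk).chromaticNumber_pos

lemma IsKCritical.not_colorable_pred [Nonempty V] {k : ℕ} (hG : IsKCritical G k) :
    ¬ G.Colorable (k - 1) := by
  intro h
  have hle := h.chromaticNumber_le
  rw [hG.1, Nat.cast_le] at hle
  have := hG.pos
  omega

end IsKCritical

theorem module_of_critical_is_critical_general {V : Type*}
    (G : SimpleGraph V) (k : ℕ) (hG : IsKCritical G k)
    (M : Set V) (hM : IsModule G M) (hMne : M ≠ Set.univ) :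
    ∃ ℓ : ℕ, ℓ < k ∧ IsKCritical (G.induce M) ℓ := by
  have : Nonempty V := (Set.ne_univ_iff_exists_notMem M).1 hMne |>.nonempty
  have hH : (G.induce M).Colorable (k - 1) := hG.2 M hMne
  have hχ := hH.chromaticNumber_le
  refine ⟨(G.induce M).chromaticNumber.toNat, ?_, ?_, fun s hs => ?_⟩
  · have := hG.pos
    have := ENat.toNat_le_of_le_natCast hχ
    omega
  · exact ENat.natCast_toNat (ne_top_of_le_ne_top (ENat.natCast_ne_top _) hχ) |>.symm
  · by_contra hns
    exact hG.not_colorable_pred <| hM.colorable_of_colorable_induce_union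
      (colorable_chromaticNumber hH) hns (hG.2 _ (image_val_union_compl_ne_univ hs))

/-- A non-trivial module of a `k`-critical graph induces an `ℓ`-critical graph
for some `ℓ < k`. -/
theorem module_of_critical_is_critical {V : Type*} [Fintype V]
    (G : SimpleGraph V) (k : ℕ) (hk : 1 ≤ k) (hG : IsKCritical G k)
    (M : Set V) (hM : IsModule G M) (hM2 : 2 ≤ M.ncard) (hMne : M ≠ Set.univ) :
    ∃ ℓ : ℕ, ℓ < k ∧ IsKCritical (G.induce M) ℓ :=
  module_of_critical_is_critical_general G k hG M hM hMne
end

section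
/- Let h ≥ 0 be an integer and let H be a pseudo-buoy with bags B1,…,B5 such that, for each i mod 5, the bag B_i is k_i-colorable, where k_1,…,k_5 are non-negative integers satisfying k_i + k_{i+1} ≤ h for each i mod 5. If k_1 + k_2 + k_3 + k_4 + k_5 ≤ 2h, then H is h-colorable. -/
/-!
First raise the weights `k i`, keeping `k i + k (i + 1) ≤ h`, until `∑ k i = 2h`: while the sum
is smaller, some bag has slack towards both of its neighbours, since otherwise every bag lies in a
pair with `k i + k (i + 1) = h`, and two disjoint such pairs already give `∑ k i ≥ 2h`. Then lay
the bags out as consecutive arcs of lengths `k 0, …, k 4` on the circle `ℤ/h`; they wind around it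
exactly twice, so bag `4` ends where bag `0` starts. Two consecutive arcs together have length at
most `h`, hence are disjoint, and bags two apart are anticomplete, so the arcs give an
`h`-coloring.
-/

open SimpleGraph

namespace SimpleGraph

variable {V ι α : Type*} {G : SimpleGraph V}

lemma nonempty_coloring_of_iUnion_eq_univ {B : ι → Set V} (hB : ⋃ i, B i = Set.univ)
    (c : ∀ i, B i → α) (hc : ∀ i j (u : B i) (v : B j), G.Adj u v → c i u ≠ c j v) :
    Nonempty (G.Coloring α) := by
  have hmem (v : V) : ∃ i, v ∈ B i := Set.mem_iUnion.mp (hB ▸ Set.mem_univ v)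
  choose bag hbag using hmem
  exact ⟨Coloring.mk (fun v => c (bag v) ⟨v, hbag v⟩) fun huv => hc _ _ _ _ huv⟩

end SimpleGraph

lemma IsPseudoBuoy.eq_or_eq_add_one_of_adj {V : Type*} {H : SimpleGraph V} {B : Fin 5 → Set V}
    (hB : IsPseudoBuoy H B) {i j : Fin 5} {u v : V} (hu : u ∈ B i) (hv : v ∈ B j)
    (huv : H.Adj u v) : i = j ∨ j = i + 1 ∨ i = j + 1 := by
  have hcases : ∀ i j : Fin 5, i = j ∨ j = i + 1 ∨ i = j + 1 ∨ j = i + 2 ∨ i = j + 2 := by decide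
  rcases hcases i j with hij | hij | hij | rfl | rfl
  · exact .inl hij
  · exact .inr (.inl hij)
  · exact .inr (.inr hij)
  · exact absurd huv (hB.not_adj_skip i u hu v hv)
  · exact absurd huv.symm (hB.not_adj_skip j v hv u hu)

namespace PseudoBuoy

variable {h : ℕ} {k : Fin 5 → ℕ}

lemma exists_slack_pair_of_sum_lt (hpair : ∀ i, k i + k (i + 1) ≤ h)
    (hsum : ∑ i, k i < 2 * h) : ∃ i, k i + k (i + 1) < h ∧ k (i + 1) + k (i + 2) < h := by
  by_contra! htight
  have := htight 0; have := htight 1; have := htight 2; have := htight 3; have := htight 4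
  have := hpair 0; have := hpair 1; have := hpair 2; have := hpair 3; have := hpair 4
  simp only [Fin.sum_univ_five, Fin.isValue, Fin.reduceAdd] at *
  omega

lemma add_single_pair_le (hpair : ∀ i, k i + k (i + 1) ≤ h) {i : Fin 5}
    (hl : k i + k (i + 1) < h) (hr : k (i + 1) + k (i + 2) < h) (j : Fin 5) :
    (k + Pi.single (i + 1) 1 : Fin 5 → ℕ) j + (k + Pi.single (i + 1) 1 : Fin 5 → ℕ) (j + 1)
      ≤ h := by
  have hne : ∀ j : Fin 5, j + 1 ≠ j := by decide
  simp only [Pi.add_apply, Pi.single_apply]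
  split_ifs with hj hj' hj'
  · exact absurd (hj'.trans hj.symm) (hne j)
  · subst hj
    have h2 : i + 1 + 1 = i + 2 := by rw [add_assoc]; rfl
    rw [h2]
    omega
  · obtain rfl := add_right_cancel hj'
    omega
  · simpa using hpair j

lemma exists_le_sum_eq (hpair : ∀ i, k i + k (i + 1) ≤ h) (hsum : ∑ i, k i ≤ 2 * h) :
    ∃ k' : Fin 5 → ℕ, k ≤ k' ∧ (∀ i, k' i + k' (i + 1) ≤ h) ∧ ∑ i, k' i = 2 * h := by
  obtain ⟨d, hd⟩ := Nat.exists_eq_add_of_le hsum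
  induction d generalizing k with
  | zero => exact ⟨k, le_rfl, hpair, hd.symm⟩
  | succ d ih =>
    obtain ⟨i, hl, hr⟩ := exists_slack_pair_of_sum_lt hpair (by omega)
    have hsum' : ∑ j, (k + Pi.single (i + 1) 1 : Fin 5 → ℕ) j = ∑ j, k j + 1 := by
      simp [Finset.sum_add_distrib, Finset.sum_pi_single']
    obtain ⟨k', hle, hpair', hsum''⟩ :=
      ih (add_single_pair_le hpair hl hr) (by omega) (by omega)
    exact ⟨k', fun j => (Nat.le_add_right _ _).trans (hle j), hpair', hsum''⟩

def arcStart (k : Fin 5 → ℕ) (i : Fin 5) : ℕ :=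
  ∑ j with j < i, k j

lemma arcStart_add_one_modEq (hdvd : h ∣ ∑ i, k i) (i : Fin 5) :
    arcStart k (i + 1) ≡ arcStart k i + k i [MOD h] := by
  rw [Fin.sum_univ_five] at hdvd
  fin_cases i <;>
    simp [arcStart, Finset.sum_filter, Fin.sum_univ_five, Nat.ModEq.refl,
      (Nat.modEq_zero_iff_dvd.2 hdvd).symm]

lemma not_arcStart_add_modEq (hpair : ∀ i, k i + k (i + 1) ≤ h) (hdvd : h ∣ ∑ i, k i)
    {i : Fin 5} {x y : ℕ} (hx : x < k i) (hy : y < k (i + 1)) :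
    ¬ arcStart k i + x ≡ arcStart k (i + 1) + y [MOD h] := by
  intro e
  have e' := e.trans ((arcStart_add_one_modEq hdvd i).add_right y)
  rw [add_assoc] at e'
  have := (e'.add_left_cancel' _).eq_of_lt_of_lt (by linarith [hpair i]) (by linarith [hpair i])
  omega

end PseudoBuoy

open PseudoBuoy in
theorem IsPseudoBuoy.colorable_of_dvd_sum {V : Type*} {H : SimpleGraph V} {B : Fin 5 → Set V}
    (hB : IsPseudoBuoy H B) {h : ℕ} {k : Fin 5 → ℕ}
    (hcol : ∀ i, (H.induce (B i)).Colorable (k i)) (hpair : ∀ i, k i + k (i + 1) ≤ h)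
    (hdvd : h ∣ ∑ i, k i) : H.Colorable h := by
  have g : ∀ i, (H.induce (B i)).Coloring (Fin (k i)) := fun i => (hcol i).some
  have hlt (i : Fin 5) (u : B i) : g i u < h :=
    (g i u).2.trans_le ((Nat.le_add_right _ _).trans (hpair i))
  refine nonempty_coloring_of_iUnion_eq_univ hB.cover
    (fun i u => (⟨(arcStart k i + g i u) % h, Nat.mod_lt _ (Nat.zero_lt_of_lt (hlt i u))⟩ : Fin h))
    fun i j u v huv hc => ?_
  have e : arcStart k i + g i u ≡ arcStart k j + g j v [MOD h] := congrArg Fin.val hc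
  rcases hB.eq_or_eq_add_one_of_adj u.2 v.2 huv with rfl | rfl | rfl
  · exact (g i).valid huv
      (Fin.val_injective ((e.add_left_cancel' _).eq_of_lt_of_lt (hlt i u) (hlt i v)))
  · exact not_arcStart_add_modEq hpair hdvd (g i u).2 (g _ v).2 e
  · exact not_arcStart_add_modEq hpair hdvd (g j v).2 (g _ u).2 e.symm

theorem pseudoBuoy_colorable_general {V : Type*}
    (H : SimpleGraph V) (B : Fin 5 → Set V) (hB : IsPseudoBuoy H B)
    (h : ℕ) (k : Fin 5 → ℕ)
    (hcol : ∀ i, (H.induce (B i)).Colorable (k i))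
    (hpair : ∀ i : Fin 5, k i + k (i + 1) ≤ h)
    (hsum : ∑ i, k i ≤ 2 * h) :
    H.Colorable h := by
  obtain ⟨k', hle, hpair', hsum'⟩ := PseudoBuoy.exists_le_sum_eq hpair hsum
  exact hB.colorable_of_dvd_sum (fun i => (hcol i).mono (hle i)) hpair' (hsum' ▸ dvd_mul_left h 2)

/-- Lemma on colorings of pseudo-buoys, part (i): if `∑ kᵢ ≤ 2h` then the
pseudo-buoy is `h`-colorable. -/
theorem pseudoBuoy_colorable {V : Type*} [Fintype V]
    (H : SimpleGraph V) (B : Fin 5 → Set V) (hB : IsPseudoBuoy H B)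
    (h : ℕ) (k : Fin 5 → ℕ)
    (hcol : ∀ i, (H.induce (B i)).Colorable (k i))
    (hpair : ∀ i : Fin 5, k i + k (i + 1) ≤ h)
    (hsum : ∑ i, k i ≤ 2 * h) :
    H.Colorable h :=
  pseudoBuoy_colorable_general H B hB h k hcol hpair hsum
end

section
/- Let h ≥ 0 be an integer and let H be a pseudo-buoy with bags B1,…,B5 such that, for each i mod 5, the bag B_i has chromatic number exactly k_i, where k_1,…,k_5 are non-negative integers satisfying k_i + k_{i+1} ≤ h for each i mod 5. If k_1 + k_2 + k_3 + k_4 + k_5 > 2h, then the chromatic number of H is strictly greater than h. -/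
open SimpleGraph

open Finset

/-!
In an `h`-colouring of a pseudo-buoy, bag `B i` sees at least `k i` colours, and consecutive
bags, being completely joined, see disjoint sets of colours. The bags seen by a single colour
therefore form an independent set of the 5-cycle, which has at most two elements, so double
counting gives `∑ k i ≤ 2 h`.
-/

theorem Finset.sum_card_le_card_mul {ι α : Type*} [Fintype α] [DecidableEq α] (t : Finset ι)
    (S : ι → Finset α) {n : ℕ} (h : ∀ a, #{i ∈ t | a ∈ S i} ≤ n) :
    ∑ i ∈ t, #(S i) ≤ Fintype.card α * n := by
  calc ∑ i ∈ t, #(S i) = ∑ a, #{i ∈ t | a ∈ S i} := by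
        simp_rw [card_eq_sum_ones, sum_filter]
        rw [sum_comm]
        simp
    _ ≤ Fintype.card α * n := by simpa using sum_le_card_nsmul univ _ n fun a _ => h a

theorem Fin.card_le_two_of_forall_add_one_notMem (T : Finset (Fin 5))
    (hT : ∀ i ∈ T, i + 1 ∉ T) : #T ≤ 2 := by
  revert T; decide

theorem Finset.sum_card_le_two_mul_of_disjoint_add_one {α : Type*} [Fintype α]
    (S : Fin 5 → Finset α) (hS : ∀ i, Disjoint (S i) (S (i + 1))) :
    ∑ i, #(S i) ≤ 2 * Fintype.card α := by
  classical
  rw [mul_comm]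
  refine sum_card_le_card_mul univ S fun a => Fin.card_le_two_of_forall_add_one_notMem _ ?_
  intro i hi hi1
  simp only [mem_filter, mem_univ, true_and] at hi hi1
  exact disjoint_left.mp (hS i) hi hi1

namespace SimpleGraph.Coloring

variable {V α : Type*} {G : SimpleGraph V} [Fintype α] (C : G.Coloring α)

open Classical in
noncomputable def colorsOn (s : Set V) : Finset α := {c | ∃ v ∈ s, C v = c}

theorem mem_colorsOn {s : Set V} {c : α} : c ∈ C.colorsOn s ↔ ∃ v ∈ s, C v = c := by
  simp [colorsOn]

theorem chromaticNumber_induce_le_card_colorsOn (s : Set V) :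
    (G.induce s).chromaticNumber ≤ #(C.colorsOn s) := by
  let D : (G.induce s).Coloring (C.colorsOn s) :=
    Coloring.mk (fun v => ⟨C v, C.mem_colorsOn.mpr ⟨v, v.2, rfl⟩⟩)
      fun hadj hEq => C.valid hadj (congrArg Subtype.val hEq)
  simpa using D.colorable.chromaticNumber_le

theorem disjoint_colorsOn {s t : Set V} (hst : ∀ x ∈ s, ∀ y ∈ t, G.Adj x y) :
    Disjoint (C.colorsOn s) (C.colorsOn t) := by
  refine Finset.disjoint_left.mpr fun c hs ht => ?_
  obtain ⟨x, hx, rfl⟩ := C.mem_colorsOn.mp hs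
  obtain ⟨y, hy, hxy⟩ := C.mem_colorsOn.mp ht
  exact C.valid (hst x hx y hy) hxy.symm

end SimpleGraph.Coloring

theorem pseudoBuoy_not_colorable_general {V : Type*}
    (H : SimpleGraph V) (B : Fin 5 → Set V) (hB : IsPseudoBuoy H B)
    (h : ℕ) (k : Fin 5 → ℕ)
    (hchrom : ∀ i, (H.induce (B i)).chromaticNumber = k i)
    (hsum : 2 * h < ∑ i, k i) :
    (h : ℕ∞) < H.chromaticNumber := by
  by_contra! hle
  obtain ⟨C⟩ := chromaticNumber_le_iff_colorable.mp hle
  have hk (i : Fin 5) : k i ≤ #(C.colorsOn (B i)) := by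
    exact_mod_cast (hchrom i).symm.trans_le (C.chromaticNumber_induce_le_card_colorsOn (B i))
  have hcount : ∑ i, #(C.colorsOn (B i)) ≤ 2 * h := by
    simpa using sum_card_le_two_mul_of_disjoint_add_one _
      fun i => C.disjoint_colorsOn (hB.adj_next i)
  exact (hsum.trans_le (sum_le_sum fun i _ => hk i)).not_ge hcount

/-- Lemma on colorings of pseudo-buoys, part (ii): if each bag is
`kᵢ`-chromatic and `∑ kᵢ > 2h` then the pseudo-buoy is not `h`-colorable. -/
theorem pseudoBuoy_not_colorable {V : Type*} [Fintype V]
    (H : SimpleGraph V) (B : Fin 5 → Set V) (hB : IsPseudoBuoy H B)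
    (h : ℕ) (k : Fin 5 → ℕ)
    (hchrom : ∀ i, (H.induce (B i)).chromaticNumber = k i)
    (hpair : ∀ i : Fin 5, k i + k (i + 1) ≤ h)
    (hsum : 2 * h < ∑ i, k i) :
    (h : ℕ∞) < H.chromaticNumber :=
  pseudoBuoy_not_colorable_general H B hB h k hchrom hsum
end
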